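/- Let p ≥ 0, let ω be positive semidefinite, and let σ be a positive semidefinite real symmetric d×d matrix that is singular (rank(σ) < d). If μ is a probability measure on the real symmetric d×d matrices with ∫ exp(-tr(u ξ)) dμ(ξ) = det(I + σu)^{-p} · exp(-tr(u (I + σu)^{-1} ω)) for all positive semidefinite u, then μ is not absolutely continuous with respect to Lebesgue measure on the space of real symmetric d×d matrices. -/

import Mathlib

open MeasureTheory Matrix

attribute [local instance] Matrix.normedAddCommGroup Matrix.normedSpace

noncomputable instance matrixMeasurableSpace (d : ℕ) :
    MeasurableSpace (Matrix (Fin d) (Fin d) ℝ) := borel _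

instance matrixBorelSpace (d : ℕ) : BorelSpace (Matrix (Fin d) (Fin d) ℝ) := ⟨rfl⟩

/-- The space `S_d` of real symmetric `d×d` matrices, as a subspace of all `d×d` matrices. -/
def symMatrices (d : ℕ) : Submodule ℝ (Matrix (Fin d) (Fin d) ℝ) where
  carrier := {A | A.IsSymm}
  add_mem' := fun ha hb => ha.add hb
  zero_mem' := Matrix.isSymm_zero
  smul_mem' := fun c _ h => h.smul c

instance symMatricesLocallyCompactSpace (d : ℕ) : LocallyCompactSpace (symMatrices d) :=
  locallyCompact_of_proper

/-!
If `σ v = 0` with `v ≠ 0`, then `σ u = 0` for `u = t • v vᵀ`, so along this ray the Laplace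
transform of `μ` is that of the point mass at `ω`. Hence the random variable `Y = exp (-tr (u ξ))`
satisfies `E[Y²] = E[Y]²`, i.e. it has zero variance, and `tr (u ξ) = tr (u ω)` for `μ`-a.e. `ξ`.
So `μ` is carried by an affine hyperplane of `S_d`, which is Lebesgue-null.
-/

open ProbabilityTheory

theorem Matrix.exists_mulVec_eq_zero_of_rank_lt {n K : Type*} [Fintype n] [DecidableEq n]
    [Field K] {A : Matrix n n K} (h : A.rank < Fintype.card n) : ∃ v ≠ 0, A *ᵥ v = 0 :=
  exists_mulVec_eq_zero_iff.2 (by_contra fun hdet => h.ne (rank_of_det_ne_zero hdet))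

theorem ProbabilityTheory.ae_eq_const_of_integral_sq_eq_sq {Ω : Type*} [MeasurableSpace Ω]
    {μ : Measure Ω} [IsProbabilityMeasure μ] {Y : Ω → ℝ} {m : ℝ} (hm : m ≠ 0)
    (h₁ : ∫ ω, Y ω ∂μ = m) (h₂ : ∫ ω, Y ω ^ 2 ∂μ = m ^ 2) : Y =ᵐ[μ] fun _ => m := by
  have hY : Integrable Y μ := by
    by_contra h; exact hm (h₁ ▸ integral_undef h)
  have hY2 : Integrable (fun ω => Y ω ^ 2) μ := by
    by_contra h; exact pow_ne_zero 2 hm (h₂ ▸ integral_undef h)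
  have hL2 : MemLp Y 2 μ := (memLp_two_iff_integrable_sq hY.1).2 hY2
  have hvar : variance Y μ = 0 := by
    rw [variance_eq_sub hL2, Pi.pow_def]; simp only [h₁, h₂, sub_self]
  rw [← h₁, ← evariance_eq_zero_iff hY.1.aemeasurable, ← ofReal_variance hL2, hvar,
    ENNReal.ofReal_zero]

theorem MeasureTheory.Measure.addHaar_linearMap_preimage_singleton {E : Type*}
    [AddCommGroup E] [Module ℝ E] [TopologicalSpace E] [IsTopologicalAddGroup E]
    [ContinuousSMul ℝ E] [T2Space E] [FiniteDimensional ℝ E] [MeasurableSpace E] [BorelSpace E]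
    (μ : Measure E) [μ.IsAddHaarMeasure] {L : E →ₗ[ℝ] ℝ} (hL : L ≠ 0) (c : ℝ) :
    μ (L ⁻¹' {c}) = 0 := by
  set e := toEuclidean (E := E)
  set L' := L ∘ₗ e.symm.toLinearMap
  have hL' : L' ≠ 0 := fun h => hL <| by
    ext x; simpa [L'] using LinearMap.congr_fun h (e x)
  obtain ⟨y₀, rfl⟩ := L'.surjective_or_eq_zero.resolve_right hL' c
  have : L ⁻¹' {L' y₀} = e ⁻¹' ((· + -y₀) ⁻¹' (LinearMap.ker L' : Set _)) := by
    ext x; simp [L', sub_eq_zero, ← sub_eq_add_neg]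
  have hmap := e.toHomeomorph.toMeasurableEquiv.map_apply (μ := μ)
    ((· + -y₀) ⁻¹' (LinearMap.ker L' : Set _))
  rw [Homeomorph.toMeasurableEquiv_coe, ContinuousLinearEquiv.coe_toHomeomorph] at hmap
  rw [this, ← hmap, measure_preimage_add_right]
  exact addHaar_submodule _ _ (LinearMap.ker_eq_top.not.2 hL')

def symMatrices.traceMulLeft {d : ℕ} (u : Matrix (Fin d) (Fin d) ℝ) : symMatrices d →ₗ[ℝ] ℝ :=
  traceLinearMap (Fin d) ℝ ℝ ∘ₗ LinearMap.mulLeft ℝ u ∘ₗ (symMatrices d).subtype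

@[simp]
theorem symMatrices.traceMulLeft_apply {d : ℕ} (u : Matrix (Fin d) (Fin d) ℝ) (ξ : symMatrices d) :
    traceMulLeft u ξ = (u * ξ.val).trace := rfl

theorem symMatrices.traceMulLeft_ne_zero {d : ℕ} {u : Matrix (Fin d) (Fin d) ℝ} (hu : u.IsSymm)
    (hu0 : u ≠ 0) : traceMulLeft u ≠ 0 := by
  intro h
  have := LinearMap.congr_fun h ⟨u, hu⟩
  rw [traceMulLeft_apply, LinearMap.zero_apply] at this
  refine hu0 (trace_conjTranspose_mul_self_eq_zero_iff.1 ?_)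
  rwa [conjTranspose_eq_transpose_of_trivial, hu.eq]

theorem wishart_not_absolutely_continuous_of_singular_scale_general {d : ℕ} (p : ℝ)
    (ω σ : Matrix (Fin d) (Fin d) ℝ)
    (hσrank : σ.rank < d)
    (μ : Measure (symMatrices d)) [IsProbabilityMeasure μ]
    (hlaplace : ∀ u : Matrix (Fin d) (Fin d) ℝ, u.PosSemidef →
      ∫ ξ, Real.exp (-(u * ξ.val).trace) ∂μ =
        (1 + σ * u).det ^ (-p) * Real.exp (-(u * (1 + σ * u)⁻¹ * ω).trace)) :
    ¬ μ ≪ (Measure.addHaar : Measure (symMatrices d)) := by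
  intro hac
  obtain ⟨v, hv0, hσv⟩ := exists_mulVec_eq_zero_of_rank_lt (A := σ) (by simpa using hσrank)
  set u := vecMulVec v v
  have hu : u.PosSemidef := by simpa using posSemidef_vecMulVec_self_star v
  have hu0 : u ≠ 0 := by simpa [u] using hv0
  have hσu : σ * u = 0 := by rw [mul_vecMulVec, hσv, zero_vecMulVec]
  set L := symMatrices.traceMulLeft u
  set c := (u * ω).trace
  have moment (n : ℕ) : ∫ ξ, Real.exp (-L ξ) ^ n ∂μ = Real.exp (-c) ^ n := by
    have h := hlaplace ((n : ℝ) • u) (hu.smul n.cast_nonneg)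
    simp only [Matrix.mul_smul, hσu, smul_zero, add_zero, det_one, Real.one_rpow, inv_one,
      Matrix.mul_one, one_mul, Matrix.smul_mul, trace_smul, smul_eq_mul] at h
    simp only [← Real.exp_nat_mul, mul_neg]
    exact h
  have hconst : ∀ᵐ ξ ∂μ, L ξ = c := by
    filter_upwards [ae_eq_const_of_integral_sq_eq_sq (Real.exp_pos (-c)).ne'
      (by simpa using moment 1) (moment 2)] with ξ hξ
    simpa using hξ
  have hnull : μ (L ⁻¹' {c}) = 0 :=
    hac (Measure.addHaar_linearMap_preimage_singleton _ (symMatrices.traceMulLeft_ne_zero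
      (transpose_vecMulVec v v) hu0) c)
  rw [measure_eq_zero_iff_ae_notMem] at hnull
  obtain ⟨ξ, hξ, hξ'⟩ := (hconst.and hnull).exists
  exact hξ' hξ

/-- If `σ` is positive semidefinite and singular (`rank σ < d`), `ω` is
positive semidefinite and `μ` is a probability measure on the symmetric `d×d` matrices with
the Laplace transform of `Γ(p, ω; σ)`, then `μ` is not absolutely continuous with respect
to Lebesgue (Haar) measure on the vector space of symmetric matrices. -/
theorem wishart_not_absolutely_continuous_of_singular_scale {d : ℕ} (p : ℝ) (hp : 0 ≤ p)
    (ω σ : Matrix (Fin d) (Fin d) ℝ) (hω : ω.PosSemidef) (hσ : σ.PosSemidef)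
    (hσrank : σ.rank < d)
    (μ : Measure (symMatrices d)) [IsProbabilityMeasure μ]
    (hlaplace : ∀ u : Matrix (Fin d) (Fin d) ℝ, u.PosSemidef →
      ∫ ξ, Real.exp (-(u * ξ.val).trace) ∂μ =
        (1 + σ * u).det ^ (-p) * Real.exp (-(u * (1 + σ * u)⁻¹ * ω).trace)) :
    ¬ μ ≪ (Measure.addHaar : Measure (symMatrices d)) :=
  wishart_not_absolutely_continuous_of_singular_scale_general p ω σ hσrank μ hlaplace
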